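/- Let H be a complex Hilbert space, d a positive integer, and T ∈ B(H) a contraction (i.e. ‖T‖ ≤ 1). Then the d-tuple (T, T², …, T^d) is Toeplitz-contractive. -/

import Mathlib

open scoped ComplexOrder

noncomputable section

variable {H : Type*} [NormedAddCommGroup H] [InnerProductSpace ℂ H] [CompleteSpace H]

/-- The `(i, j)` entry of the `(d+1) × (d+1)` block Toeplitz operator matrix associated to a
`d`-tuple `T` of bounded operators on `H`, with diagonal entries `α • 1`. -/
def tEntry {d : ℕ} (T : Fin d → H →L[ℂ] H) (α : ℂ) (i j : Fin (d + 1)) : H →L[ℂ] H :=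
  if _h1 : (i : ℕ) = (j : ℕ) then α • (1 : H →L[ℂ] H)
  else if _h2 : (j : ℕ) < (i : ℕ) then
    T ⟨(i : ℕ) - (j : ℕ) - 1, by have := i.isLt; omega⟩
  else
    ContinuousLinearMap.adjoint (T ⟨(j : ℕ) - (i : ℕ) - 1, by have := j.isLt; omega⟩)

/-- Positivity of a block operator matrix `M`, expressed through its quadratic form on the
direct sum of copies of `H`: for every vector `x = (x_i)`, `∑ i j, ⟪M i j (x j), x i⟫ ≥ 0`. -/
def IsPosBlockMatrix {ι : Type*} [Fintype ι] (M : ι → ι → (H →L[ℂ] H)) : Prop :=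
  ∀ x : ι → H, 0 ≤ ∑ i, ∑ j, (inner ℂ (M i j (x j)) (x i) : ℂ)

/-- A `d`-tuple of operators is Toeplitz-contractive if its block Toeplitz operator matrix
(with 1's on the diagonal) is a positive operator on `⊕_1^{d+1} H`. -/
def ToeplitzContractive {d : ℕ} (T : Fin d → H →L[ℂ] H) : Prop :=
  IsPosBlockMatrix (tEntry T 1)

/-!
Put `x_j = 0` outside `0 ≤ j ≤ d` and run the linear system `w₀ = 0`, `w_{n+1} = T w_n + x_n`, so that
`w_{i+1} = ∑_{j ≤ i} T^{i-j} x_j`. The rows of the block Toeplitz matrix split into the part on and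
below the diagonal, which gives `⟪w_{i+1}, x_i⟫`, and the part above it, which gives `⟪x_i, T w_i⟫`.
Since `w_{i+1} = T w_i + x_i`, the `i`-th row contributes `‖w_{i+1}‖² - ‖T w_i‖²`, and for a contraction
these sum to at least the telescoping sum `∑ (‖w_{i+1}‖² - ‖w_i‖²) = ‖w_{d+1}‖² ≥ 0`.
-/

open Finset

theorem Finset.sum_range_sum_range_eq_sum_lower_add_upper {M : Type*} [AddCommMonoid M]
    (f : ℕ → ℕ → M) (n : ℕ) :
    ∑ i ∈ range n, ∑ j ∈ range n, f i j =
      ∑ i ∈ range n, (∑ j ∈ range (i + 1), f i j + ∑ j ∈ range i, f j i) := by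
  induction n with
  | zero => simp
  | succ n ih =>
    simp only [sum_range_succ, sum_add_distrib, ih]
    abel

section PowerKernel

variable {𝕜 E : Type*} [RCLike 𝕜] [NormedAddCommGroup E] [InnerProductSpace 𝕜 E]

theorem inner_add_left_self_add_inner (u v : E) :
    inner 𝕜 (u + v) v + inner 𝕜 v u = ((‖u + v‖ ^ 2 - ‖u‖ ^ 2 : ℝ) : 𝕜) := by
  push_cast
  rw [← inner_self_eq_norm_sq_to_K, ← inner_self_eq_norm_sq_to_K]
  simp only [inner_add_left, inner_add_right]
  ring

def powerState (T : E →L[𝕜] E) (x : ℕ → E) : ℕ → E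
  | 0 => 0
  | n + 1 => T (powerState T x n) + x n

theorem sum_range_pow_apply_eq_apply_powerState (T : E →L[𝕜] E) (x : ℕ → E) (n : ℕ) :
    ∑ j ∈ range n, (T ^ (n - j)) (x j) = T (powerState T x n) := by
  induction n with
  | zero => simp [powerState]
  | succ n ih =>
    have hpow : ∀ j ∈ range n, (T ^ (n + 1 - j)) (x j) = T ((T ^ (n - j)) (x j)) := by
      intro j hj
      rw [Nat.sub_add_comm (mem_range.1 hj).le, pow_succ', mul_apply_eq_comp]
    rw [sum_range_succ, sum_congr rfl hpow, ← map_sum, ih, Nat.add_sub_cancel_left, pow_one,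
      powerState, map_add]

theorem powerState_succ (T : E →L[𝕜] E) (x : ℕ → E) (n : ℕ) :
    powerState T x (n + 1) = ∑ j ∈ range (n + 1), (T ^ (n - j)) (x j) := by
  rw [sum_range_succ, Nat.sub_self, pow_zero, one_apply_eq_self,
    sum_range_pow_apply_eq_apply_powerState, powerState]

def powerToeplitzKernel (T : E →L[𝕜] E) (x : ℕ → E) (i j : ℕ) : 𝕜 :=
  if j ≤ i then inner 𝕜 ((T ^ (i - j)) (x j)) (x i) else inner 𝕜 (x j) ((T ^ (j - i)) (x i))

theorem sum_powerToeplitzKernel (T : E →L[𝕜] E) (x : ℕ → E) (n : ℕ) :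
    ∑ i ∈ range n, ∑ j ∈ range n, powerToeplitzKernel T x i j =
      ((∑ i ∈ range n, (‖powerState T x (i + 1)‖ ^ 2 - ‖T (powerState T x i)‖ ^ 2) : ℝ) : 𝕜) := by
  rw [sum_range_sum_range_eq_sum_lower_add_upper, RCLike.ofReal_sum]
  refine sum_congr rfl fun i _ => ?_
  have hlower : ∑ j ∈ range (i + 1), powerToeplitzKernel T x i j =
      inner 𝕜 (powerState T x (i + 1)) (x i) := by
    rw [powerState_succ, sum_inner]
    exact sum_congr rfl fun j hj => if_pos (Nat.lt_succ_iff.1 (mem_range.1 hj))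
  have hupper : ∑ j ∈ range i, powerToeplitzKernel T x j i =
      inner 𝕜 (x i) (T (powerState T x i)) := by
    rw [← sum_range_pow_apply_eq_apply_powerState, inner_sum]
    exact sum_congr rfl fun j hj => if_neg (not_le.2 (mem_range.1 hj))
  rw [hlower, hupper, powerState, inner_add_left_self_add_inner]

theorem sum_norm_powerState_sq_sub_nonneg {T : E →L[𝕜] E} (hT : ‖T‖ ≤ 1) (x : ℕ → E) (n : ℕ) :
    0 ≤ ∑ i ∈ range n, (‖powerState T x (i + 1)‖ ^ 2 - ‖T (powerState T x i)‖ ^ 2) := by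
  have hcontr : ∀ v : E, ‖T v‖ ≤ ‖v‖ := fun v => by simpa using T.le_of_opNorm_le hT v
  calc 0 ≤ ‖powerState T x n‖ ^ 2 := sq_nonneg _
    _ = ∑ i ∈ range n, (‖powerState T x (i + 1)‖ ^ 2 - ‖powerState T x i‖ ^ 2) := by
      rw [sum_range_sub (fun i => ‖powerState T x i‖ ^ 2)]
      simp [powerState]
    _ ≤ _ := sum_le_sum fun i _ => by gcongr; exact hcontr _

end PowerKernel

theorem inner_tEntry_pow_apply {d : ℕ} (T : H →L[ℂ] H) (x : ℕ → H) (i j : Fin (d + 1)) :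
    inner ℂ (tEntry (fun k : Fin d => T ^ ((k : ℕ) + 1)) 1 i j (x j)) (x i) =
      powerToeplitzKernel T x i j := by
  unfold tEntry powerToeplitzKernel
  rcases lt_trichotomy (i : ℕ) j with hlt | heq | hgt
  · rw [dif_neg hlt.ne, dif_neg (not_lt.2 hlt.le), if_neg (not_le.2 hlt)]
    dsimp only
    rw [Nat.sub_one_add_one (by omega), ContinuousLinearMap.adjoint_inner_left]
  · simp [heq]
  · rw [dif_neg hgt.ne', dif_pos hgt, if_pos hgt.le]
    dsimp only
    rw [Nat.sub_one_add_one (by omega)]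

theorem toeplitzContractive_powers_of_contraction
    (d : ℕ) (T : H →L[ℂ] H) (hT : ‖T‖ ≤ 1) :
    ToeplitzContractive (fun k : Fin d => T ^ ((k : ℕ) + 1)) := by
  intro x
  obtain ⟨x, rfl⟩ : ∃ x' : ℕ → H, x = fun i : Fin (d + 1) => x' i :=
    ⟨fun n => if h : n < d + 1 then x ⟨n, h⟩ else 0, funext fun i => by simp [i.isLt]⟩
  simp only [inner_tEntry_pow_apply, Fin.sum_univ_eq_sum_range (powerToeplitzKernel T x _),
    Fin.sum_univ_eq_sum_range (fun i => ∑ j ∈ range (d + 1), powerToeplitzKernel T x i j)]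
  rw [sum_powerToeplitzKernel]
  exact Complex.zero_le_real.2 (sum_norm_powerState_sq_sub_nonneg hT x (d + 1))
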